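/- arXiv:1206.0287 — 6 statements merged into one kernel-verified Lean document; each statement's English description precedes it below -/
import Mathlib

section
/- Let G be a group with a prefiltration (G_i)_{i∈ℕ} and let (d_i)_{i∈ℕ} ⊆ ℕ be a superadditive sequence (d_{i+j} ≥ d_i + d_j for all i,j). Define G^d_i = G_j whenever d_{j-1} < i ≤ d_j (with the convention d_{-1} = -∞, so G^d_i = G_0 for i ≤ d_0). Then (G^d_i)_{i∈ℕ} is again a prefiltration, i.e., [G^d_i, G^d_j] ⊆ G^d_{i+j} for all i, j ∈ ℕ. -/
/-- Rescaling a prefiltration along a superadditive sequence gives a prefiltration: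
if `Gd i = G 0` for `i ≤ d 0` and `Gd i = G (j+1)` whenever `d j < i ≤ d (j+1)`,
then `[Gd i, Gd j] ≤ Gd (i+j)`. -/
theorem stmt_1 {Γ : Type*} [Group Γ] (G : ℕ → Subgroup Γ)
    (hmono : ∀ i, G (i + 1) ≤ G i)
    (hcomm : ∀ i j, ⁅G i, G j⁆ ≤ G (i + j))
    (d : ℕ → ℕ) (hd : ∀ i j, d i + d j ≤ d (i + j))
    (hcover : ∀ i, ∃ j, i ≤ d j)
    (Gd : ℕ → Subgroup Γ)
    (hGd0 : ∀ i, i ≤ d 0 → Gd i = G 0)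
    (hGdS : ∀ i j, d j < i → i ≤ d (j + 1) → Gd i = G (j + 1)) :
    ∀ i j, ⁅Gd i, Gd j⁆ ≤ Gd (i + j) := by
  have hanti : ∀ {m n : ℕ}, m ≤ n → G n ≤ G m := by
    intro m n h
    induction h with
    | refl => exact le_rfl
    | step _ ih => exact le_trans (hmono _) ih
  have key : ∀ i, Gd i = G (Nat.find (hcover i)) := by
    intro i
    have hspec : i ≤ d (Nat.find (hcover i)) := Nat.find_spec (hcover i)
    cases h : Nat.find (hcover i) with
    | zero => rw [h] at hspec; exact hGd0 i hspec
    | succ k =>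
      rw [h] at hspec
      have hk : ¬ i ≤ d k := Nat.find_min (hcover i) (h ▸ Nat.lt_succ_self k)
      exact hGdS i k (Nat.lt_of_not_le hk) hspec
  intro i j
  rw [key i, key j, key (i + j)]
  have hle : Nat.find (hcover (i + j)) ≤ Nat.find (hcover i) + Nat.find (hcover j) :=
    Nat.find_min' _ (le_trans (Nat.add_le_add (Nat.find_spec (hcover i))
      (Nat.find_spec (hcover j))) (hd _ _))
  exact le_trans (hcomm _ _) (hanti hle)
end

section
/- Let G be a finitely generated nilpotent group and V a subgroup. Then there exist at most finitely many subgroups of G of the form ⟨V, c⟩ (the subgroup generated by V together with a single element c ∈ G) that are finite index extensions of V. -/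
/-!
Each `⟨V, c⟩` in question contains `V` with finite index, so it suffices to show that `V` has only
finitely many finite-index overgroups. Induct on the length of the lower central series and pass
to the quotient by its last nontrivial term `C`, which is central and, by the usual commutator
calculus, finitely generated. If two finite-index overgroups `H₀` and `H` of `V` have the same
image modulo `C`, then every `h ∈ H` is `h₀ z` with `h₀ ∈ H₀` and `z ∈ C` central; as powers of `h`
and of `z ^ k = h₀⁻ᵏ hᵏ` lie in `V` and `H₀`, some power of `z` lies in `V`. So `H ≤ I ⊔ H₀`, where
`I` is the group of such central `z`. Since `I` is finitely generated abelian and torsion modulo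
`H₀`, the index of `V` in `I ⊔ H₀` is finite, and each fibre consists of intermediate subgroups of
a finite-index extension.
-/

open scoped commutatorElement

namespace Subgroup

variable {G : Type*} [Group G]

theorem relIndex_sup_right_of_le_normalizer {H K : Subgroup G} (hHK : H ≤ normalizer K) :
    K.relIndex (H ⊔ K) = K.relIndex H := by
  have := normal_subgroupOf_of_le_normalizer hHK
  have := normal_subgroupOf_sup_of_le_normalizer hHK
  exact Nat.card_congr (QuotientGroup.quotientInfEquivProdNormalizerQuotient H K hHK).toEquiv.symm

theorem relIndex_map_map_dvd {G' : Type*} [Group G'] (f : G →* G') (H K : Subgroup G) :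
    (H.map f).relIndex (K.map f) ∣ H.relIndex K := by
  rw [← relIndex_comap]
  exact relIndex_dvd_of_le_left K (le_comap_map f H)

theorem finite_setOf_le_of_finiteIndex (H : Subgroup G) [H.FiniteIndex] :
    {K : Subgroup G | H ≤ K}.Finite := by
  -- a subgroup containing `H` is the union of the `H`-cosets it meets
  have : Finite (G ⧸ H) := finite_quotient_of_finiteIndex
  refine Set.Finite.of_finite_image
    (f := fun K : Subgroup G => ((↑) '' (K : Set G) : Set (G ⧸ H))) (Set.toFinite _) ?_
  have hle : ∀ K L : Subgroup G, H ≤ L →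
      ((↑) '' (K : Set G) : Set (G ⧸ H)) ⊆ (↑) '' (L : Set G) → K ≤ L := by
    intro K L hHL hKL g hg
    obtain ⟨l, hl, hlg⟩ := hKL ⟨g, hg, rfl⟩
    rw [QuotientGroup.eq] at hlg
    simpa using mul_mem hl (hHL hlg)
  intro K hK L hL hKL
  exact le_antisymm (hle K L hL hKL.le) (hle L K hK hKL.ge)

theorem finite_setOf_le_le_of_finiteIndex {H L : Subgroup G}
    (hHL : (H.subgroupOf L).FiniteIndex) : {K : Subgroup G | H ≤ K ∧ K ≤ L}.Finite := by
  refine ((finite_setOf_le_of_finiteIndex (H.subgroupOf L)).image (map L.subtype)).subset ?_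
  rintro K ⟨hHK, hKL⟩
  exact ⟨K.subgroupOf L, subgroupOf_mono L hHK, map_subgroupOf_eq_of_le hKL⟩

theorem isMulCommutative_of_le_center {H : Subgroup G} (hH : H ≤ center G) : IsMulCommutative H :=
  .of_setLike_mul_comm fun _ ha b _ => (mem_center_iff.mp (hH ha) b).symm

theorem normal_of_le_center {H : Subgroup G} (hH : H ≤ center G) : H.Normal :=
  ⟨fun h hh g => by rwa [mem_center_iff.mp (hH hh) g, mul_inv_cancel_right]⟩

open scoped IsMulCommutative in
theorem FG.of_le_of_isMulCommutative {H K : Subgroup G} [IsMulCommutative K] (hK : K.FG)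
    (hHK : H ≤ K) : H.FG := by
  have : Group.FG K := (Group.fg_iff_subgroup_fg K).mpr hK
  have : IsNoetherian ℤ (Additive K) :=
    have : Module.Finite ℤ (Additive K) := Module.Finite.iff_addGroup_fg.mpr inferInstance
    isNoetherian_of_isNoetherianRing_of_finite ℤ (Additive K)
  have hfg := IsNoetherian.noetherian (AddSubgroup.toIntSubmodule (H.subgroupOf K).toAddSubgroup)
  rw [Submodule.fg_iff_addSubgroup_fg, AddSubgroup.toIntSubmodule_toAddSubgroup,
    ← Subgroup.fg_iff_add_fg] at hfg
  have : Group.FG (H.subgroupOf K) := (Group.fg_iff_subgroup_fg _).mpr hfg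
  exact (Group.fg_iff_subgroup_fg H).mp <|
    Group.fg_of_surjective (f := (subgroupOfEquivOfLe hHK).toMonoidHom)
      (subgroupOfEquivOfLe hHK).surjective

open scoped IsMulCommutative in
theorem finiteIndex_subgroupOf_of_forall_pow_mem {H K : Subgroup G} [IsMulCommutative K]
    (hK : K.FG) (hpow : ∀ k ∈ K, ∃ n, 0 < n ∧ k ^ n ∈ H) : (H.subgroupOf K).FiniteIndex := by
  have : Group.FG K := (Group.fg_iff_subgroup_fg K).mpr hK
  have : Finite (K ⧸ H.subgroupOf K) := by
    refine CommGroup.finite_of_fg_isMulTorsion _ fun q => ?_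
    induction q using QuotientGroup.induction_on with
    | H k =>
      obtain ⟨n, hn, hkn⟩ := hpow k k.2
      refine isOfFinOrder_iff_pow_eq_one.mpr ⟨n, hn, ?_⟩
      rw [← QuotientGroup.mk_pow, QuotientGroup.eq_one_iff, mem_subgroupOf]
      simpa using hkn
  exact finiteIndex_of_finite_quotient

theorem commutatorElement_mem_iff_commute {N : Subgroup G} [N.Normal] {g y : G} :
    ⁅g, y⁆ ∈ N ↔ Commute (g : G ⧸ N) y := by
  rw [← QuotientGroup.eq_one_iff, ← QuotientGroup.mk'_apply, map_commutatorElement,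
    commutatorElement_eq_one_iff_commute]
  rfl

theorem mem_upperCentralSeriesStep_of_closure_eq_top {N : Subgroup G} [N.Normal] {X : Set G}
    (hX : closure X = ⊤) {g : G} (hg : ∀ x ∈ X, ⁅g, x⁆ ∈ N) : g ∈ upperCentralSeriesStep N := by
  have hle : closure X ≤ comap (QuotientGroup.mk' N) (centralizer {(g : G ⧸ N)}) :=
    closure_le _ |>.mpr fun x hx => mem_centralizer_singleton_iff.mpr
      (commutatorElement_mem_iff_commute.mp (hg x hx)).symm
  intro y
  exact commutatorElement_mem_iff_commute.mpr
    (mem_centralizer_singleton_iff.mp (hle (hX ▸ mem_top y))).symm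

instance normal_upperCentralSeriesStep (N : Subgroup G) [N.Normal] :
    (upperCentralSeriesStep N).Normal := by
  rw [upperCentralSeriesStep_eq_comap_center]
  infer_instance

theorem commutator_normalClosure_sup_top_le {N : Subgroup G} [N.Normal] {T X : Set G}
    {L : Subgroup G} (hX : closure X = ⊤) (hTX : ∀ t ∈ T, ∀ x ∈ X, ⁅t, x⁆ ∈ N) (hL : ⁅L, ⊤⁆ ≤ N) :
    ⁅normalClosure T ⊔ L, ⊤⁆ ≤ N := by
  suffices normalClosure T ⊔ L ≤ upperCentralSeriesStep N from
    commutator_le.mpr fun k hk g _ => this hk g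
  refine sup_le (normalClosure_le_normal fun t ht => ?_) fun l hl g => ?_
  · exact mem_upperCentralSeriesStep_of_closure_eq_top hX (hTX t ht)
  · exact commutator_le.mp hL l hl g (mem_top g)

theorem exists_finite_lowerCentralSeries_le_normalClosure_sup [Group.FG G] (i : ℕ) :
    ∃ T : Set G, T.Finite ∧ T ⊆ (⊤ : Subgroup G).lowerCentralSeries i ∧
      (⊤ : Subgroup G).lowerCentralSeries i ≤
        normalClosure T ⊔ (⊤ : Subgroup G).lowerCentralSeries (i + 1) := by
  obtain ⟨X, hX, hXfin⟩ := Group.fg_iff.mp ‹_›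
  induction i with
  | zero =>
    refine ⟨X, hXfin, fun _ _ => mem_top _, ?_⟩
    rw [lowerCentralSeries_zero, ← hX]
    exact le_sup_of_le_left closure_le_normalClosure
  | succ i ih =>
    obtain ⟨T, hTfin, hTγ, hγT⟩ := ih
    refine ⟨Set.image2 (⁅·, ·⁆) T X, hTfin.image2 _ hXfin, ?_, ?_⟩
    · rintro _ ⟨t, ht, x, -, rfl⟩
      exact commutator_mem_commutator (hTγ ht) (mem_top x)
    · calc (⊤ : Subgroup G).lowerCentralSeries (i + 1)
          ≤ ⁅normalClosure T ⊔ (⊤ : Subgroup G).lowerCentralSeries (i + 1), ⊤⁆ :=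
            commutator_mono hγT le_rfl
        _ ≤ _ := commutator_normalClosure_sup_top_le hX
            (fun t ht x hx => mem_sup_left (subset_normalClosure (Set.mem_image2_of_mem ht hx)))
            le_sup_right

theorem fg_lowerCentralSeries_of_succ_eq_bot [Group.FG G] {n : ℕ}
    (hn : (⊤ : Subgroup G).lowerCentralSeries (n + 1) = ⊥) :
    ((⊤ : Subgroup G).lowerCentralSeries n).FG := by
  have hcenter : (⊤ : Subgroup G).lowerCentralSeries n ≤ center G :=
    commutator_top_right_eq_bot_iff_le_center.mp hn
  obtain ⟨T, hTfin, hTγ, hγT⟩ := exists_finite_lowerCentralSeries_le_normalClosure_sup (G := G) n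
  have := normal_of_le_center ((closure_le _).mpr hTγ |>.trans hcenter)
  refine (fg_iff _).mpr ⟨T, le_antisymm ((closure_le _).mpr hTγ) ?_, hTfin⟩
  rw [hn, sup_bot_eq] at hγT
  exact hγT.trans (normalClosure_le_normal subset_closure)

def centralIsolator (V : Subgroup G) : Subgroup G where
  carrier := {z | z ∈ center G ∧ ∃ n, 0 < n ∧ z ^ n ∈ V}
  one_mem' := ⟨one_mem _, 1, one_pos, by simp⟩
  mul_mem' := by
    rintro a b ⟨ha, m, hm, ham⟩ ⟨hb, k, hk, hbk⟩
    refine ⟨mul_mem ha hb, m * k, Nat.mul_pos hm hk, ?_⟩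
    have hab : Commute a b := (mem_center_iff.mp ha b).symm
    rw [hab.mul_pow, pow_mul, mul_comm m k, pow_mul]
    exact mul_mem (pow_mem ham k) (pow_mem hbk m)
  inv_mem' := by
    rintro a ⟨ha, m, hm, ham⟩
    exact ⟨inv_mem ha, m, hm, by simpa using inv_mem ham⟩

def finiteIndexOvergroups (V : Subgroup G) : Set (Subgroup G) :=
  {H | V ≤ H ∧ (V.subgroupOf H).FiniteIndex}

theorem finiteIndex_subgroupOf_inf_centralIsolator_sup {C V H : Subgroup G} (hC : C ≤ center G)
    (hCfg : C.FG) (hVH : V ≤ H) (hfi : (V.subgroupOf H).FiniteIndex) :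
    (V.subgroupOf (C ⊓ centralIsolator V ⊔ H)).FiniteIndex := by
  have hK : C ⊓ centralIsolator V ≤ center G := inf_le_left.trans hC
  have := isMulCommutative_of_le_center hC
  have := isMulCommutative_of_le_center hK
  have hHK : (H.subgroupOf (C ⊓ centralIsolator V)).FiniteIndex :=
    finiteIndex_subgroupOf_of_forall_pow_mem (hCfg.of_le_of_isMulCommutative inf_le_left)
      fun _ hz => hz.2.2.imp fun _ hn => ⟨hn.1, hVH hn.2⟩
  constructor
  change V.relIndex _ ≠ 0
  rw [← relIndex_mul_relIndex V H _ hVH le_sup_right,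
    relIndex_sup_right_of_le_normalizer (hK.trans (center_le_normalizer _))]
  exact mul_ne_zero hfi.index_ne_zero hHK.index_ne_zero

variable {G' : Type*} [Group G'] (f : G →* G')

theorem map_mem_finiteIndexOvergroups {V H : Subgroup G} (hH : H ∈ finiteIndexOvergroups V) :
    H.map f ∈ finiteIndexOvergroups (V.map f) :=
  ⟨map_mono hH.1, ⟨ne_zero_of_dvd_ne_zero hH.2.index_ne_zero (relIndex_map_map_dvd f V H)⟩⟩

theorem le_inf_centralIsolator_sup_of_map_le {V H H₀ : Subgroup G} (hker : f.ker ≤ center G)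
    (hVH₀ : V ≤ H₀) (hH₀ : (V.subgroupOf H₀).FiniteIndex) (hH : (V.subgroupOf H).FiniteIndex)
    (hmap : H.map f ≤ H₀.map f) : H ≤ f.ker ⊓ centralIsolator V ⊔ H₀ := by
  intro h hh
  obtain ⟨h₀, hh₀, hfh⟩ := hmap (mem_map_of_mem f hh)
  set z := h₀⁻¹ * h
  have hz : z ∈ f.ker := by simp [z, MonoidHom.mem_ker, hfh]
  have hcomm : Commute h₀ z := mem_center_iff.mp (hker hz) h₀
  have hh_eq : h = h₀ * z := (mul_inv_cancel_left h₀ h).symm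
  obtain ⟨k, hk, -, hhk⟩ := exists_pow_mem_of_relIndex_ne_zero hH.index_ne_zero hh
  have hzk : z ^ k ∈ H₀ := by
    have : z ^ k = (h₀ ^ k)⁻¹ * h ^ k := by rw [hh_eq, hcomm.mul_pow, inv_mul_cancel_left]
    rw [this]
    exact mul_mem (inv_mem (pow_mem hh₀ k)) (hVH₀ hhk.1)
  obtain ⟨j, hj, -, hzkj⟩ := exists_pow_mem_of_relIndex_ne_zero hH₀.index_ne_zero hzk
  have hzI : z ∈ centralIsolator V :=
    ⟨hker hz, k * j, Nat.mul_pos hk hj, by rw [pow_mul]; exact hzkj.1⟩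
  rw [hh_eq]
  exact mul_mem (mem_sup_right hh₀) (mem_sup_left ⟨hz, hzI⟩)

theorem finite_finiteIndexOvergroups_of_map (hker : f.ker ≤ center G) (hfg : f.ker.FG)
    {V : Subgroup G} (hfin : (finiteIndexOvergroups (V.map f)).Finite) :
    (finiteIndexOvergroups V).Finite := by
  refine .of_finite_fibers (map f)
    (hfin.subset (Set.image_subset_iff.mpr fun _ => map_mem_finiteIndexOvergroups f)) ?_
  rintro _ ⟨H₀, ⟨hVH₀, hH₀⟩, rfl⟩
  refine (finite_setOf_le_le_of_finiteIndex
    (finiteIndex_subgroupOf_inf_centralIsolator_sup hker hfg hVH₀ hH₀)).subset ?_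
  rintro H ⟨⟨hVH, hH⟩, hmap⟩
  exact ⟨hVH, le_inf_centralIsolator_sup_of_map_le f hker hVH₀ hH₀ hH (le_of_eq hmap)⟩

theorem finite_finiteIndexOvergroups_of_lowerCentralSeries_eq_bot [Group.FG G] {n : ℕ}
    (hn : (⊤ : Subgroup G).lowerCentralSeries n = ⊥) (V : Subgroup G) :
    (finiteIndexOvergroups V).Finite := by
  induction n generalizing G with
  | zero => exact (Set.finite_singleton ⊥).subset fun H _ => eq_bot_iff.mpr (hn ▸ le_top)
  | succ n ih =>
    set C := (⊤ : Subgroup G).lowerCentralSeries n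
    have hQ : (⊤ : Subgroup (G ⧸ C)).lowerCentralSeries n = ⊥ := by
      rw [← map_top_of_surjective _ (QuotientGroup.mk'_surjective C), ← map_lowerCentralSeries,
        QuotientGroup.map_mk'_self]
    refine finite_finiteIndexOvergroups_of_map (QuotientGroup.mk' C) ?_ ?_ (ih hQ _)
    · rw [QuotientGroup.ker_mk']
      exact commutator_top_right_eq_bot_iff_le_center.mp hn
    · rw [QuotientGroup.ker_mk']
      exact fg_lowerCentralSeries_of_succ_eq_bot hn

theorem finite_finiteIndexOvergroups [Group.FG G] [Group.IsNilpotent G] (V : Subgroup G) :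
    (finiteIndexOvergroups V).Finite :=
  let ⟨_, hn⟩ := nilpotent_iff_lowerCentralSeries.mp ‹_›
  finite_finiteIndexOvergroups_of_lowerCentralSeries_eq_bot hn V

end Subgroup

/-- In a finitely generated nilpotent group, a subgroup `V` has only finitely
many finite index extensions of the form `⟨V, c⟩`. -/
theorem stmt_7 {G : Type*} [Group G] [Group.FG G] [Group.IsNilpotent G]
    (V : Subgroup G) :
    {H : Subgroup G | (∃ c : G, H = V ⊔ Subgroup.closure {c}) ∧
      (V.subgroupOf H).FiniteIndex}.Finite :=
  (Subgroup.finite_finiteIndexOvergroups V).subset fun _ ⟨⟨_, hc⟩, hfi⟩ => ⟨hc ▸ le_sup_left, hfi⟩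
end

section
/- Let F₀, F₁ be groups of functions from a set Γ to an abelian group G (under pointwise addition), each closed under the symmetric derivative operation and finitely generated (FVIP groups, with respect to prefiltrations of lengths d₀ and d₁ making them VIP). Then the join F₀ ∨ F₁ (the group generated by F₀ ∪ F₁) is closed under the symmetric derivative, using the identity ∂_m(gh) = h⁻¹·(∂_m g)·g(m)·h·(∂_m h)·g(m)⁻¹ where ∂_β g(α) = g(α)⁻¹ g(α∪β) g(β)⁻¹. -/
/-- A subgroup `F` of the group of maps `Finset ℕ → G` (pointwise operations)
is closed under the symmetric derivative if for each `g ∈ F` and each `β`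
there is `h ∈ F` with `h α = g α⁻¹ * g (α ∪ β) * g β⁻¹` for all `α` disjoint
from `β`. -/
def ClosedUnderSymmDeriv {G : Type*} [Group G]
    (F : Subgroup (Finset ℕ → G)) : Prop :=
  ∀ g ∈ F, ∀ β : Finset ℕ, β.Nonempty → ∃ h ∈ F,
    ∀ α : Finset ℕ, α.Nonempty → Disjoint α β →
      h α = (g α)⁻¹ * g (α ∪ β) * (g β)⁻¹

/-- The join of two finitely generated groups of maps into an abelian group,
each closed under symmetric derivatives, is again closed under symmetric
derivatives. -/
theorem stmt_9 {G : Type*} [CommGroup G]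
    (F₀ F₁ : Subgroup (Finset ℕ → G))
    (h₀fg : F₀.FG) (h₁fg : F₁.FG)
    (h₀ : ClosedUnderSymmDeriv F₀) (h₁ : ClosedUnderSymmDeriv F₁) :
    ClosedUnderSymmDeriv (F₀ ⊔ F₁) := by
  intro g hg β hβ
  obtain ⟨a, ha, b, hb, rfl⟩ := Subgroup.mem_sup.mp hg
  obtain ⟨u, huF, hu⟩ := h₀ a ha β hβ
  obtain ⟨v, hvF, hv⟩ := h₁ b hb β hβ
  refine ⟨u * v, mul_mem (Subgroup.mem_sup_left huF) (Subgroup.mem_sup_right hvF), ?_⟩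
  intro α hα hαβ
  simp only [Pi.mul_apply, hu α hα hαβ, hv α hα hαβ, mul_inv_rev]
  simp [mul_comm, mul_left_comm, mul_assoc]
end

section
/- Let (P_α)_{α∈F} be a family of commuting orthogonal projections on a Hilbert space H indexed by finite nonempty subsets of ℕ, and let f ∈ H. Suppose that whenever α₁ < α₂ < ... < α_l (i.e., max α_i < min α_{i+1}), one has P_{α₁}P_{α₂}···P_{α_l} f = 0. Then there is a sub-IP-ring of F on which ‖P_α f‖ → 0 in the IP sense, i.e., the IP-limit of ‖P_α f‖ along this sub-IP-ring is 0. -/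
open scoped RealInnerProductSpace

/-- `α < β` for finite sets: every element of `α` is below every element of `β`. -/
def FinsetLT (α β : Finset ℕ) : Prop := ∀ a ∈ α, ∀ b ∈ β, a < b

namespace StmtTwelve

/-! ### Chains of finite sets -/

def Chain' (s : ℕ → Finset ℕ) : Prop :=
  (∀ n, (s n).Nonempty) ∧ ∀ m n, m < n → FinsetLT (s m) (s n)

lemma chain_of_succ {s : ℕ → Finset ℕ} (h1 : ∀ n, (s n).Nonempty)
    (h2 : ∀ n, FinsetLT (s n) (s (n + 1))) : Chain' s := by
  refine ⟨h1, fun m n hmn => ?_⟩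
  induction n with
  | zero => omega
  | succ n ih =>
    rcases Nat.lt_or_ge m n with h | h
    · intro a ha b hb
      obtain ⟨c, hc⟩ := h1 n
      exact lt_trans (ih h a ha c hc) (h2 n c hc b hb)
    · have hmn' : m = n := by omega
      subst hmn'; exact h2 m

def comp (s β : ℕ → Finset ℕ) : ℕ → Finset ℕ := fun n => (β n).biUnion s

lemma comp_biUnion (s β : ℕ → Finset ℕ) (γ : Finset ℕ) :
    γ.biUnion (comp s β) = (γ.biUnion β).biUnion s :=
  (Finset.biUnion_biUnion γ β s).symm

lemma comp_assoc (s β ρ : ℕ → Finset ℕ) : comp (comp s β) ρ = comp s (comp β ρ) := by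
  funext n
  exact (comp_biUnion s β (ρ n))

lemma comp_id (s : ℕ → Finset ℕ) : comp s (fun n => {n}) = s := by
  funext n
  exact Finset.singleton_biUnion

lemma biUnion_lt {s : ℕ → Finset ℕ} (hs : Chain' s) {γ γ' : Finset ℕ}
    (h : FinsetLT γ γ') : FinsetLT (γ.biUnion s) (γ'.biUnion s) := by
  intro a ha b hb
  rw [Finset.mem_biUnion] at ha hb
  obtain ⟨i, hi, hai⟩ := ha
  obtain ⟨j, hj, hbj⟩ := hb
  exact hs.2 i j (h i hi j hj) a hai b hbj

lemma biUnion_nonempty' {s : ℕ → Finset ℕ} (hs : ∀ n, (s n).Nonempty) {γ : Finset ℕ}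
    (hγ : γ.Nonempty) : (γ.biUnion s).Nonempty := by
  rw [Finset.biUnion_nonempty]
  exact ⟨γ.min' hγ, γ.min'_mem hγ, hs _⟩

lemma chain_comp {s β : ℕ → Finset ℕ} (hs : Chain' s) (hβ : Chain' β) :
    Chain' (comp s β) :=
  ⟨fun n => biUnion_nonempty' hs.1 (hβ.1 n),
   fun m n hmn => biUnion_lt hs (hβ.2 m n hmn)⟩

lemma chain_id : Chain' (fun n => ({n} : Finset ℕ)) := by
  refine ⟨fun n => ⟨n, by simp⟩, fun m n hmn a ha b hb => ?_⟩
  simp only [Finset.mem_singleton] at ha hb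
  omega

lemma chain_min_ge {β : ℕ → Finset ℕ} (hβ : Chain' β) : ∀ n, ∀ j ∈ β n, n ≤ j := by
  intro n
  induction n with
  | zero => intro j _; omega
  | succ n ih =>
    intro j hj
    obtain ⟨i, hi⟩ := hβ.1 n
    have h1 := ih i hi
    have h2 := hβ.2 n (n + 1) (by omega) i hi j hj
    omega

lemma sup_succ_le {γ : Finset ℕ} {x : ℕ} (hγ : γ.Nonempty) (h : ∀ y ∈ γ, y < x) :
    γ.sup id + 1 ≤ x := by
  obtain ⟨y, hy⟩ := hγ
  have hx : (⊥ : ℕ) < x := lt_of_le_of_lt (Nat.zero_le y) (h y hy)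
  have h2 : γ.sup id < x := (Finset.sup_lt_iff hx).2 (fun b hb => h b hb)
  omega

/-! ### Hindman's theorem for finite unions, with separation -/

instance : Mul (Finset ℕ) := ⟨fun a b => a ∪ b⟩

lemma fu_mul_def (a b : Finset ℕ) : a * b = a ∪ b := rfl

instance : Semigroup (Finset ℕ) := ⟨fun a b c => Finset.union_assoc a b c⟩

attribute [local instance] Ultrafilter.mul Ultrafilter.semigroup

/-- The tail sets. -/
def Tail (n : ℕ) : Set (Finset ℕ) := {α | α.Nonempty ∧ ∀ i ∈ α, n ≤ i}

def sing : Stream' (Finset ℕ) := fun n => {n}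

lemma FP_drop_subset_Tail : ∀ n, Hindman.FP (sing.drop n) ⊆ Tail n := by
  have key : ∀ (b : Stream' (Finset ℕ)) (m : Finset ℕ), m ∈ Hindman.FP b →
      ∀ n, b = sing.drop n → m ∈ Tail n := by
    intro b m h
    induction h with
    | head' a =>
      rintro n rfl
      have : (sing.drop n).head = ({n} : Finset ℕ) := by
        rw [Stream'.head_drop]; rfl
      rw [this]
      exact ⟨⟨n, by simp⟩, by simp⟩
    | tail' a m h ih =>
      rintro n rfl
      have ht : (sing.drop n).tail = sing.drop (n + 1) := Stream'.tail_drop' (i := n)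
      have := ih (n + 1) ht
      exact ⟨this.1, fun i hi => by have := this.2 i hi; omega⟩
    | cons' a m h ih =>
      rintro n rfl
      have ht : (sing.drop n).tail = sing.drop (n + 1) := Stream'.tail_drop' (i := n)
      have hm := ih (n + 1) ht
      have hh : (sing.drop n).head = ({n} : Finset ℕ) := by
        rw [Stream'.head_drop]; rfl
      rw [hh]
      constructor
      · rw [fu_mul_def]
        exact ⟨n, by simp⟩
      · intro i hi
        rw [fu_mul_def, Finset.mem_union] at hi
        rcases hi with hi | hi
        · simp at hi; omega
        · have := hm.2 i hi; omega
  intro n m hm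
  exact key _ m hm n rfl

open Filter in
theorem exists_idem_tail :
    ∃ U : Ultrafilter (Finset ℕ), U * U = U ∧ ∀ n, Hindman.FP (sing.drop n) ∈ U := by
  let S : Set (Ultrafilter (Finset ℕ)) := ⋂ n, { U | ∀ᶠ m in U, m ∈ Hindman.FP (sing.drop n) }
  have h := exists_idempotent_in_compact_subsemigroup ?_ S ?_ ?_ ?_
  · rcases h with ⟨U, hU, U_idem⟩
    exact ⟨U, U_idem, fun n => Set.mem_iInter.mp hU n⟩
  · exact Ultrafilter.continuous_mul_left
  · apply IsCompact.nonempty_iInter_of_sequence_nonempty_isCompact_isClosed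
    · intro n U hU
      filter_upwards [hU]
      rw [← Stream'.drop_drop, ← Stream'.tail_eq_drop]
      exact Hindman.FP.tail _
    · intro n
      exact ⟨pure _, Filter.mem_pure.mpr <| Hindman.FP.head _⟩
    · exact (ultrafilter_isClosed_basic _).isCompact
    · intro n
      apply ultrafilter_isClosed_basic
  · exact IsClosed.isCompact (isClosed_iInter fun i => ultrafilter_isClosed_basic _)
  · intro U hU V hV
    rw [Set.mem_iInter] at *
    intro n
    rw [Set.mem_setOf_eq, Ultrafilter.eventually_mul]
    filter_upwards [hU n] with m hm
    obtain ⟨n', hn⟩ := Hindman.FP.mul hm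
    filter_upwards [hV (n' + n)] with m' hm'
    apply hn
    simpa only [Stream'.drop_drop, Nat.add_comm] using hm'

open Filter in
theorem exists_chain_in (U : Ultrafilter (Finset ℕ)) (idem : U * U = U)
    (hT : ∀ n, Tail n ∈ U) (D : Set (Finset ℕ)) (hD : D ∈ U) :
    ∃ b : ℕ → Finset ℕ, Chain' b ∧ ∀ γ : Finset ℕ, γ.Nonempty → γ.biUnion b ∈ D := by
  classical
  -- the "star" operation
  have star : ∀ s : Set (Finset ℕ), s ∈ U → {m | ∀ᶠ m' in (U : Filter (Finset ℕ)), m * m' ∈ s} ∈ U := by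
    intro s hs
    have h2 : ∀ᶠ m in ↑(U * U), m ∈ s := by rwa [idem]
    rw [Ultrafilter.eventually_mul] at h2
    exact h2
  -- state type
  let A := {p : Set (Finset ℕ) × ℕ // p.1 ∈ U}
  let pickSet : A → Set (Finset ℕ) := fun p =>
    p.1.1 ∩ {m | ∀ᶠ m' in (U : Filter (Finset ℕ)), m * m' ∈ p.1.1} ∩ Tail p.1.2
  have pick_mem : ∀ p : A, pickSet p ∈ U := fun p =>
    inter_mem (inter_mem p.2 (star _ p.2)) (hT _)
  have pick_ne : ∀ p : A, (pickSet p).Nonempty := fun p =>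
    Ultrafilter.nonempty_of_mem (pick_mem p)
  let elem : A → Finset ℕ := fun p => (pick_ne p).choose
  have elem_mem : ∀ p : A, elem p ∈ pickSet p := fun p => (pick_ne p).choose_spec
  let succ : A → A := fun p =>
    ⟨(p.1.1 ∩ {m | elem p * m ∈ p.1.1}, (elem p).sup id + 1),
      inter_mem p.2 (elem_mem p).1.2⟩
  let st : ℕ → A := fun n => succ^[n] ⟨(D, 0), hD⟩
  have st_succ : ∀ n, st (n + 1) = succ (st n) := fun n =>
    Function.iterate_succ_apply' succ n _
  let b : ℕ → Finset ℕ := fun n => elem (st n)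
  let Sset : ℕ → Set (Finset ℕ) := fun n => (st n).1.1
  have hb_mem : ∀ n, b n ∈ Sset n := fun n => (elem_mem (st n)).1.1
  have hb_tail : ∀ n, b n ∈ Tail (st n).1.2 := fun n => (elem_mem (st n)).2
  have hS_succ : ∀ n, Sset (n + 1) = Sset n ∩ {m | b n * m ∈ Sset n} := by
    intro n; show (st (n+1)).1.1 = _; rw [st_succ]
  have hN_succ : ∀ n, (st (n + 1)).1.2 = (b n).sup id + 1 := by
    intro n; rw [st_succ]
  have hS_mono : ∀ m n, m ≤ n → Sset n ⊆ Sset m := by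
    intro m n hmn
    induction n with
    | zero => have : m = 0 := by omega
              subst this; exact fun x h => h
    | succ n ih =>
      rcases Nat.lt_or_ge m (n+1) with h | h
      · intro x hx
        rw [hS_succ] at hx
        exact ih (by omega) hx.1
      · have : m = n + 1 := by omega
        subst this; exact fun x h => h
  have hb_ne : ∀ n, (b n).Nonempty := fun n => (hb_tail n).1
  have hb_lt : ∀ n, FinsetLT (b n) (b (n + 1)) := by
    intro n a ha c hc
    have h1 : ∀ i ∈ b (n+1), (b n).sup id + 1 ≤ i := by
      intro i hi
      have := (hb_tail (n+1)).2 i hi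
      rwa [hN_succ n] at this
    have h2 := Finset.le_sup (f := id) ha
    have := h1 c hc
    simp only [id_eq] at h2
    omega
  -- key claim
  have key : ∀ (n : ℕ) (γ : Finset ℕ) (hne : γ.Nonempty), γ.card ≤ n →
      γ.biUnion b ∈ Sset (γ.min' hne) := by
    intro n
    induction n with
    | zero => intro γ hne hc; have := Finset.card_pos.2 hne; omega
    | succ n ih =>
      intro γ hne hc
      set m := γ.min' hne with hm
      have hmγ : m ∈ γ := γ.min'_mem hne
      set γ' := γ.erase m with hγ'
      rcases γ'.eq_empty_or_nonempty with he | hne'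
      · have hγs : γ = {m} := by
          apply Finset.eq_singleton_iff_unique_mem.2
          refine ⟨hmγ, fun x hx => ?_⟩
          by_contra hxm
          have : x ∈ γ' := Finset.mem_erase.2 ⟨hxm, hx⟩
          rw [he] at this
          exact absurd this (Finset.notMem_empty x)
        rw [hγs, Finset.singleton_biUnion]
        exact hb_mem m
      · have hcard : γ'.card ≤ n := by
          have hce : γ'.card = γ.card - 1 := by
            rw [hγ']; exact Finset.card_erase_of_mem hmγ
          have hpos : 1 ≤ γ.card := Finset.card_pos.2 hne
          omega
        have hmin' : m + 1 ≤ γ'.min' hne' := by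
          have h1 : γ'.min' hne' ∈ γ' := γ'.min'_mem hne'
          have h2 := Finset.mem_erase.1 h1
          have h3 : m ≤ γ'.min' hne' := γ.min'_le _ h2.2
          omega
        have ihs := ih γ' hne' hcard
        have step1 : γ'.biUnion b ∈ Sset (m + 1) :=
          hS_mono (m+1) (γ'.min' hne') hmin' ihs
        rw [hS_succ m] at step1
        have step2 : b m * (γ'.biUnion b) ∈ Sset m := step1.2
        have hins : γ = insert m γ' := (Finset.insert_erase hmγ).symm
        rw [hins, Finset.biUnion_insert]
        rw [fu_mul_def] at step2
        exact step2
  refine ⟨b, chain_of_succ hb_ne hb_lt, fun γ hγ => ?_⟩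
  have := key γ.card γ hγ le_rfl
  have h0 : Sset (γ.min' hγ) ⊆ Sset 0 := hS_mono 0 _ (by omega)
  have hS0 : Sset 0 = D := rfl
  rw [hS0] at h0
  exact h0 this

theorem hindmanFU (C : Set (Finset ℕ)) :
    ∃ b : ℕ → Finset ℕ, Chain' b ∧
      ((∀ γ : Finset ℕ, γ.Nonempty → γ.biUnion b ∈ C) ∨
       (∀ γ : Finset ℕ, γ.Nonempty → γ.biUnion b ∉ C)) := by
  obtain ⟨U, idem, hFP⟩ := exists_idem_tail
  have hT : ∀ n, Tail n ∈ U := fun n =>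
    Filter.mem_of_superset (hFP n) (FP_drop_subset_Tail n)
  rcases Ultrafilter.mem_or_compl_mem U C with hC | hC
  · obtain ⟨b, hb, hgood⟩ := exists_chain_in U idem hT C hC
    exact ⟨b, hb, Or.inl hgood⟩
  · obtain ⟨b, hb, hgood⟩ := exists_chain_in U idem hT Cᶜ hC
    exact ⟨b, hb, Or.inr hgood⟩

/-! ### Hilbert space part -/

section Hilbert

variable {H : Type*} [NormedAddCommGroup H] [InnerProductSpace ℝ H]

lemma proj_apply_self {P : Finset ℕ → H →L[ℝ] H}
    (hidem : ∀ α, IsIdempotentElem (P α)) (α : Finset ℕ) (x : H) :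
    P α (P α x) = P α x := by
  have h := hidem α
  unfold IsIdempotentElem at h
  calc P α (P α x) = (P α * P α) x := (ContinuousLinearMap.mul_apply _ _ _).symm
  _ = P α x := by rw [h]

lemma inner_proj_self {P : Finset ℕ → H →L[ℝ] H}
    (hidem : ∀ α, IsIdempotentElem (P α))
    (hsa : ∀ α (x y : H), ⟪P α x, y⟫ = ⟪x, P α y⟫) (α : Finset ℕ) (x : H) :
    ⟪x, P α x⟫ = ‖P α x‖ ^ 2 := by
  have h1 : ⟪P α x, P α x⟫ = ‖P α x‖ ^ 2 := real_inner_self_eq_norm_sq _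
  have h2 : ⟪P α x, P α x⟫ = ⟪x, P α (P α x)⟫ := hsa α x (P α x)
  rw [proj_apply_self hidem] at h2
  rw [← h2, h1]

lemma norm_proj_le {P : Finset ℕ → H →L[ℝ] H}
    (hidem : ∀ α, IsIdempotentElem (P α))
    (hsa : ∀ α (x y : H), ⟪P α x, y⟫ = ⟪x, P α y⟫) (α : Finset ℕ) (x : H) :
    ‖P α x‖ ≤ ‖x‖ := by
  have h1 := inner_proj_self hidem hsa α x
  have h2 : ⟪x, P α x⟫ ≤ ‖x‖ * ‖P α x‖ := real_inner_le_norm _ _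
  nlinarith [norm_nonneg (P α x), norm_nonneg x]

/-- `MyAnn P k N g` : applying any decreasing (in application order) chain of `k`
projections, at sets with all elements `≥ N` and each subsequent set entirely above
the previous one, annihilates `g`. -/
def MyAnn (P : Finset ℕ → H →L[ℝ] H) : ℕ → ℕ → H → Prop
  | 0, _, g => g = 0
  | k+1, N, g => ∀ γ : Finset ℕ, γ.Nonempty → (∀ x ∈ γ, N ≤ x) →
      MyAnn P k (γ.sup id + 1) (P γ g)

lemma bridge {P : Finset ℕ → H →L[ℝ] H}
    (hcomm : ∀ α β, (P α).comp (P β) = (P β).comp (P α)) :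
    ∀ (k : ℕ) (N : ℕ) (g : H),
      (∀ γ : Fin k → Finset ℕ, (∀ i, (γ i).Nonempty) →
        (∀ i j, i < j → FinsetLT (γ i) (γ j)) →
        (∀ i, ∀ x ∈ γ i, N ≤ x) →
        (List.ofFn fun i => P (γ i)).prod g = 0) →
      MyAnn P k N g := by
  intro k
  induction k with
  | zero =>
    intro N g h
    have h0 := h (fun i => i.elim0) (fun i => i.elim0) (fun i j _ => i.elim0)
      (fun i => i.elim0)
    simp only [List.ofFn_zero, List.prod_nil] at h0
    show g = 0
    simpa using h0
  | succ k ih =>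
    intro N g h
    intro γ₀ hne hfl
    apply ih
    intro δ hδne hδlt hδfl
    have hNsup : N ≤ γ₀.sup id + 1 := by
      obtain ⟨y, hy⟩ := hne
      have h1 := hfl y hy
      have h2 := Finset.le_sup (f := id) hy
      simp only [id_eq] at h2
      omega
    have key := h (Fin.cons γ₀ δ) ?_ ?_ ?_
    · rw [List.ofFn_succ] at key
      simp only [Fin.cons_zero, Fin.cons_succ] at key
      rw [List.prod_cons] at key
      have hcm : Commute (P γ₀) ((List.ofFn fun i => P (δ i)).prod) := by
        apply Commute.list_prod_right
        intro y hy
        rw [List.mem_ofFn] at hy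
        obtain ⟨i, rfl⟩ := hy
        show P γ₀ * P (δ i) = P (δ i) * P γ₀
        rw [ContinuousLinearMap.mul_def, ContinuousLinearMap.mul_def]
        exact hcomm γ₀ (δ i)
      rw [hcm.eq, ContinuousLinearMap.mul_apply] at key
      exact key
    · intro i
      rcases Fin.eq_zero_or_eq_succ i with rfl | ⟨i', rfl⟩
      · simpa using hne
      · simpa using hδne i'
    · intro i j hij
      rcases Fin.eq_zero_or_eq_succ j with rfl | ⟨j', rfl⟩
      · exact absurd hij (Fin.not_lt_zero i)
      · rcases Fin.eq_zero_or_eq_succ i with rfl | ⟨i', rfl⟩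
        · simp only [Fin.cons_zero, Fin.cons_succ]
          intro a ha b hb
          have h1 := hδfl j' b hb
          have h2 := Finset.le_sup (f := id) ha
          simp only [id_eq] at h2
          omega
        · simp only [Fin.cons_succ]
          exact hδlt i' j' (by rwa [Fin.succ_lt_succ_iff] at hij)
    · intro i
      rcases Fin.eq_zero_or_eq_succ i with rfl | ⟨i', rfl⟩
      · simpa using hfl
      · simp only [Fin.cons_succ]
        intro x hx
        have := hδfl i' x hx
        omega

lemma bessel_arith (B SS NG ε Mr : ℝ) (hB0 : 0 ≤ B) (hNG : 0 ≤ NG)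
    (hε : 0 < ε) (hMε : 2 * B ^ 2 < Mr * ε ^ 2) (hM1 : 1 ≤ Mr)
    (h_low : Mr * ε ^ 2 ≤ SS) (hle : SS ≤ B * NG) (h5 : NG ^ 2 ≤ SS + ε ^ 2 / 4) :
    False := by
  have hSSpos : 0 < SS := by nlinarith
  have hε2SS : ε ^ 2 ≤ SS := by nlinarith
  have hsq : SS ^ 2 ≤ B ^ 2 * NG ^ 2 := by nlinarith
  have k1 : SS * SS ≤ (5/4 * B ^ 2) * SS := by nlinarith [sq_nonneg B]
  have k4 : SS ≤ 5/4 * B ^ 2 := le_of_mul_le_mul_right (by linarith) hSSpos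
  nlinarith [sq_nonneg B]

lemma dep_seq {α : Type*} (z : α) (R : ℕ → α → α → Prop) (h : ∀ n a, ∃ b, R n a b) :
    ∃ F : ℕ → α, F 0 = z ∧ ∀ n, R n (F n) (F (n + 1)) := by
  choose f hf using h
  exact ⟨fun n => Nat.rec z f n, rfl, fun n => hf n _⟩

lemma good {P : Finset ℕ → H →L[ℝ] H}
    (hidem : ∀ α, IsIdempotentElem (P α))
    (hsa : ∀ α (x y : H), ⟪P α x, y⟫ = ⟪x, P α y⟫) :
    ∀ (k : ℕ) (g : H) (N : ℕ), MyAnn P k N g →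
      ∀ s : ℕ → Finset ℕ, Chain' s → (∀ n, ∀ x ∈ s n, N ≤ x) →
      ∀ ε : ℝ, 0 < ε →
      ∃ β : ℕ → Finset ℕ, Chain' β ∧
        ∀ γ : Finset ℕ, γ.Nonempty → ‖P (γ.biUnion (comp s β)) g‖ < ε := by
  intro k
  induction k with
  | zero =>
    intro g N hMy s hs hsN ε hε
    have hg : g = 0 := hMy
    refine ⟨fun n => {n}, chain_id, fun γ hγ => ?_⟩
    rw [hg, map_zero, norm_zero]
    exact hε
  | succ k ih =>
    intro g N hMy s hs hsN ε hε
    obtain ⟨b, hb, hdich⟩ := hindmanFU {α : Finset ℕ | ‖P (α.biUnion s) g‖ < ε}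
    rcases hdich with hgood | hbad
    · refine ⟨b, hb, fun γ hγ => ?_⟩
      have h1 := hgood γ hγ
      rw [Set.mem_setOf_eq] at h1
      rwa [comp_biUnion]
    · exfalso
      set t := comp s b with ht
      have hts : Chain' t := chain_comp hs hb
      have htN : ∀ n, ∀ x ∈ t n, N ≤ x := by
        intro n x hx
        rw [ht] at hx
        simp only [comp, Finset.mem_biUnion] at hx
        obtain ⟨j, hj, hxj⟩ := hx
        exact hsN j x hxj
      have hL : ∀ γ : Finset ℕ, γ.Nonempty → ε ≤ ‖P (γ.biUnion t) g‖ := by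
        intro γ hγ
        have h1 := hbad γ hγ
        rw [Set.mem_setOf_eq, not_lt] at h1
        rwa [ht, comp_biUnion]
      -- constants
      set B := ‖g‖ with hB
      have hB0 : 0 ≤ B := norm_nonneg g
      obtain ⟨M₀, hM₀⟩ := exists_nat_gt (2 * B ^ 2 / ε ^ 2)
      set M := M₀ + 1 with hM
      have hMR : (0:ℝ) < (M:ℝ) := by positivity
      have hM1 : (1:ℝ) ≤ (M:ℝ) := by
        have : (1:ℕ) ≤ M := by omega
        exact_mod_cast this
      have hMε : 2 * B ^ 2 < (M:ℝ) * ε ^ 2 := by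
        have hε2 : 0 < ε ^ 2 := by positivity
        rw [div_lt_iff₀ hε2] at hM₀
        have hle : (M₀:ℝ) ≤ (M:ℝ) := by exact_mod_cast Nat.le_succ M₀
        nlinarith
      set ε' := ε ^ 2 / (4 * (B + 1) * (M:ℝ) ^ 2) with hε'def
      have hden : (0:ℝ) < 4 * (B + 1) * (M:ℝ) ^ 2 := by nlinarith
      have hε' : 0 < ε' := div_pos (by positivity) hden
      -- one refinement step
      have step : ∀ d : ℕ → Finset ℕ, Chain' d →
          ∃ d' : ℕ → Finset ℕ, Chain' d' ∧
            (∀ γ : Finset ℕ, γ.Nonempty → ∃ γ' : Finset ℕ, γ'.Nonempty ∧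
              γ.biUnion (comp t d') = γ'.biUnion (comp t d)) ∧
            (∀ γ : Finset ℕ, γ.Nonempty →
              ‖P (γ.biUnion (comp t d')) (P ((d 0).biUnion t) g)‖ < ε') := by
        intro d hd
        set e := (d 0).biUnion t with he
        have hene : e.Nonempty := biUnion_nonempty' hts.1 (hd.1 0)
        have heN : ∀ x ∈ e, N ≤ x := by
          intro x hx
          rw [he, Finset.mem_biUnion] at hx
          obtain ⟨j, hj, hxj⟩ := hx
          exact htN j x hxj
        have hMy2 : MyAnn P k (e.sup id + 1) (P e g) := hMy e hene heN
        set t' := comp t (fun n => d (n+1)) with ht'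
        have hdt : Chain' (fun n => d (n+1)) :=
          ⟨fun n => hd.1 (n+1), fun m n hmn => hd.2 _ _ (by omega)⟩
        have ht's : Chain' t' := chain_comp hts hdt
        have ht'N : ∀ n, ∀ x ∈ t' n, e.sup id + 1 ≤ x := by
          intro n x hx
          have hlt : FinsetLT e (t' n) := biUnion_lt hts (hd.2 0 (n+1) (by omega))
          exact sup_succ_le hene (fun y hy => hlt y hy x hx)
        obtain ⟨r, hr, hrs⟩ := ih (P e g) (e.sup id + 1) hMy2 t' ht's ht'N ε' hε'
        refine ⟨comp (fun n => d (n+1)) r, chain_comp hdt hr, ?_, ?_⟩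
        · intro γ hγ
          have hρ : (γ.biUnion r).Nonempty := biUnion_nonempty' hr.1 hγ
          refine ⟨(γ.biUnion r).image (fun n => n + 1), hρ.image _, ?_⟩
          have h1 : comp t (comp (fun n => d (n+1)) r)
              = comp (comp t (fun n => d (n+1))) r := (comp_assoc t _ r).symm
          rw [h1, comp_biUnion, Finset.image_biUnion]
          rfl
        · intro γ hγ
          have h2 := hrs γ hγ
          rw [ht', comp_assoc] at h2
          exact h2
      -- iterate the step
      obtain ⟨DD, hDD0, hDDstep⟩ := dep_seq
        (⟨fun n => ({n} : Finset ℕ), chain_id⟩ : {d : ℕ → Finset ℕ // Chain' d})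
        (fun _ a b =>
          (∀ γ : Finset ℕ, γ.Nonempty → ∃ γ' : Finset ℕ, γ'.Nonempty ∧
            γ.biUnion (comp t b.1) = γ'.biUnion (comp t a.1)) ∧
          (∀ γ : Finset ℕ, γ.Nonempty →
            ‖P (γ.biUnion (comp t b.1)) (P ((a.1 0).biUnion t) g)‖ < ε'))
        (fun _ a => by
          obtain ⟨d', h1, h2, h3⟩ := step a.1 a.2
          exact ⟨⟨d', h1⟩, h2, h3⟩)
      set ee : ℕ → Finset ℕ := fun m => ((DD m).1 0).biUnion t with hee
      set gv : ℕ → H := fun m => P (ee m) g with hgv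
      have hee_ne : ∀ m, (ee m).Nonempty := fun m =>
        biUnion_nonempty' hts.1 ((DD m).2.1 0)
      have hgv_low : ∀ m, ε ≤ ‖gv m‖ := fun m => hL _ ((DD m).2.1 0)
      have hgv_le : ∀ m, ‖gv m‖ ≤ B := fun m => norm_proj_le hidem hsa _ g
      -- transfer across iterations
      have htrans : ∀ i j, i ≤ j → ∀ γ : Finset ℕ, γ.Nonempty →
          ∃ γ' : Finset ℕ, γ'.Nonempty ∧
            γ.biUnion (comp t (DD j).1) = γ'.biUnion (comp t (DD i).1) := by
        intro i j hij
        induction j, hij using Nat.le_induction with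
        | base => exact fun γ hγ => ⟨γ, hγ, rfl⟩
        | succ j hij ihj =>
          intro γ hγ
          obtain ⟨γ₁, hγ₁, he1⟩ := (hDDstep j).1 γ hγ
          obtain ⟨γ₂, hγ₂, he2⟩ := ihj γ₁ hγ₁
          exact ⟨γ₂, hγ₂, by rw [he1, he2]⟩
      have hcross : ∀ i j, i < j → ‖P (ee j) (gv i)‖ < ε' := by
        intro i j hij
        obtain ⟨γ', hγ', heq⟩ := htrans (i+1) j hij ({0} : Finset ℕ) ⟨0, by simp⟩
        have h0 : ({0} : Finset ℕ).biUnion (comp t (DD j).1) = ee j := by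
          rw [Finset.singleton_biUnion]
          rfl
        rw [h0] at heq
        have h3 := (hDDstep i).2 γ' hγ'
        rw [← heq] at h3
        exact h3
      have hinner_cross : ∀ i j, i ≠ j → |⟪gv i, gv j⟫| ≤ B * ε' := by
        have haux : ∀ i j, i < j → |⟪gv i, gv j⟫| ≤ B * ε' := by
          intro i j hij
          have h1 : ⟪gv i, gv j⟫ = ⟪P (ee j) (gv i), g⟫ := by
            rw [hsa (ee j) (gv i) g]
          rw [h1]
          have h2 := abs_real_inner_le_norm (P (ee j) (gv i)) g
          have h3 := (hcross i j hij).le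
          have h4 : ‖P (ee j) (gv i)‖ * ‖g‖ ≤ ε' * B :=
            mul_le_mul h3 le_rfl hB0 hε'.le
          calc |⟪P (ee j) (gv i), g⟫| ≤ ‖P (ee j) (gv i)‖ * ‖g‖ := h2
          _ ≤ ε' * B := h4
          _ = B * ε' := mul_comm _ _
        intro i j hij
        rcases Nat.lt_or_ge i j with h | h
        · exact haux i j h
        · have hj : j < i := by omega
          rw [real_inner_comm]
          exact haux j i hj
      -- Bessel-type contradiction
      set SS := ∑ i ∈ Finset.range M, ‖gv i‖ ^ 2 with hSS
      set GG := ∑ i ∈ Finset.range M, gv i with hGG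
      have h_low : (M:ℝ) * ε ^ 2 ≤ SS := by
        have hterm : ∀ i ∈ Finset.range M, ε ^ 2 ≤ ‖gv i‖ ^ 2 := by
          intro i _
          have := hgv_low i
          nlinarith [hε]
        have := Finset.card_nsmul_le_sum (Finset.range M) (fun i => ‖gv i‖ ^ 2)
          (ε ^ 2) hterm
        rwa [Finset.card_range, nsmul_eq_mul] at this
      have h_inner : ⟪g, GG⟫ = SS := by
        rw [hGG, inner_sum]
        exact Finset.sum_congr rfl (fun i _ => inner_proj_self hidem hsa (ee i) g)
      have hrow : ∀ i ∈ Finset.range M, ⟪gv i, GG⟫ ≤ ‖gv i‖ ^ 2 + (M:ℝ) * (B * ε') := by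
        intro i hi
        rw [hGG, inner_sum]
        rw [← Finset.add_sum_erase (Finset.range M) (fun j => ⟪gv i, gv j⟫) hi]
        have hself : ⟪gv i, gv i⟫ = ‖gv i‖ ^ 2 := real_inner_self_eq_norm_sq _
        rw [hself]
        have hrest : ∑ j ∈ (Finset.range M).erase i, ⟪gv i, gv j⟫ ≤ (M:ℝ) * (B * ε') := by
          have hb : ∀ j ∈ (Finset.range M).erase i, ⟪gv i, gv j⟫ ≤ B * ε' := by
            intro j hj
            have hne : j ≠ i := (Finset.mem_erase.1 hj).1
            exact le_trans (le_abs_self _) (hinner_cross i j (Ne.symm hne))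
          have h1 := Finset.sum_le_card_nsmul ((Finset.range M).erase i)
            (fun j => ⟪gv i, gv j⟫) (B * ε') hb
          have h2 : ((Finset.range M).erase i).card ≤ M := by
            have := Finset.card_erase_le (s := Finset.range M) (a := i)
            rwa [Finset.card_range] at this
          have h3 : (((Finset.range M).erase i).card : ℝ) * (B * ε') ≤ (M:ℝ) * (B * ε') := by
            apply mul_le_mul_of_nonneg_right _ (by positivity)
            exact_mod_cast h2
          rw [nsmul_eq_mul] at h1
          exact le_trans h1 h3
        linarith
      have htotal : ⟪GG, GG⟫ ≤ SS + (M:ℝ) * ((M:ℝ) * (B * ε')) := by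
        rw [hGG, sum_inner]
        have h1 := Finset.sum_le_sum hrow
        rw [Finset.sum_add_distrib, Finset.sum_const, Finset.card_range,
          nsmul_eq_mul] at h1
        exact h1
      have hbound2 : (M:ℝ) * ((M:ℝ) * (B * ε')) ≤ ε ^ 2 / 4 := by
        have hB1 : (0:ℝ) < B + 1 := by linarith
        have heq : (M:ℝ) * ((M:ℝ) * (B * ε')) = (B / (B + 1)) * (ε ^ 2 / 4) := by
          rw [hε'def]
          field_simp
        rw [heq]
        have hfrac : B / (B + 1) ≤ 1 := by
          rw [div_le_one hB1]; linarith
        have h4 : (0:ℝ) ≤ ε ^ 2 / 4 := by positivity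
        nlinarith
      have hGGnorm : ⟪GG, GG⟫ = ‖GG‖ ^ 2 := real_inner_self_eq_norm_sq _
      have hCS : ⟪g, GG⟫ ≤ ‖g‖ * ‖GG‖ := real_inner_le_norm _ _
      have h5 : ‖GG‖ ^ 2 ≤ SS + ε ^ 2 / 4 := by
        rw [← hGGnorm]; linarith
      have hle : SS ≤ B * ‖GG‖ := by rw [← h_inner, hB]; exact hCS
      exact bessel_arith B SS ‖GG‖ ε (M:ℝ) hB0 (norm_nonneg GG) hε hMε hM1 h_low
        hle h5

end Hilbert

end StmtTwelve

/-- If `(P_α)` is a family of commuting orthogonal projections on a Hilbert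
space and the product of the projections along any increasing `l`-tuple
annihilates `f`, then there is a sub-IP-ring (given by an increasing chain
`s 0 < s 1 < ⋯` of finite nonempty sets) on which `‖P_α f‖ → 0` in the IP
sense. -/
theorem stmt_12 {H : Type*} [NormedAddCommGroup H] [InnerProductSpace ℝ H]
    [CompleteSpace H]
    (P : Finset ℕ → H →L[ℝ] H)
    (hidem : ∀ α, IsIdempotentElem (P α))
    (hsa : ∀ α (x y : H), ⟪P α x, y⟫ = ⟪x, P α y⟫)
    (hcomm : ∀ α β, (P α).comp (P β) = (P β).comp (P α))
    (f : H) (l : ℕ)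
    (hann : ∀ s : Fin l → Finset ℕ, (∀ i, (s i).Nonempty) →
      (∀ i j : Fin l, i < j → FinsetLT (s i) (s j)) →
      (List.ofFn fun i => P (s i)).prod f = 0) :
    ∃ s : ℕ → Finset ℕ, (∀ n, (s n).Nonempty) ∧
      (∀ n, FinsetLT (s n) (s (n + 1))) ∧
      ∀ ε > (0 : ℝ), ∃ n₀ : ℕ, ∀ β : Finset ℕ, β.Nonempty →
        (∀ i ∈ β, n₀ ≤ i) → ‖P (β.biUnion s) f‖ < ε := by
  classical
  open StmtTwelve in
  have hMy : StmtTwelve.MyAnn P l 0 f :=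
    StmtTwelve.bridge hcomm l 0 f (fun γ h1 h2 _ => hann γ h1 h2)
  obtain ⟨u, hu0, hustep⟩ := StmtTwelve.dep_seq
    (⟨fun n => ({n} : Finset ℕ), StmtTwelve.chain_id⟩ : {s : ℕ → Finset ℕ // StmtTwelve.Chain' s})
    (fun n a b =>
      (∃ β : ℕ → Finset ℕ, StmtTwelve.Chain' β ∧ b.1 = StmtTwelve.comp a.1 β) ∧
      (∀ γ : Finset ℕ, γ.Nonempty → ‖P (γ.biUnion b.1) f‖ < 1 / ((n:ℝ) + 1)))
    (fun n a => by
      obtain ⟨β, hβ, hsm⟩ := StmtTwelve.good hidem hsa l f 0 hMy a.1 a.2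
        (fun _ _ _ => Nat.zero_le _) (1 / ((n:ℝ) + 1)) (by positivity)
      exact ⟨⟨StmtTwelve.comp a.1 β, StmtTwelve.chain_comp a.2 hβ⟩, ⟨β, hβ, rfl⟩, hsm⟩)
  -- relation between different stages
  have compRel : ∀ a b : ℕ, a ≤ b → ∃ ρ : ℕ → Finset ℕ,
      StmtTwelve.Chain' ρ ∧ (u b).1 = StmtTwelve.comp (u a).1 ρ := by
    intro a b hab
    induction b, hab using Nat.le_induction with
    | base => exact ⟨fun n => {n}, StmtTwelve.chain_id, (StmtTwelve.comp_id _).symm⟩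
    | succ b hab ihb =>
      obtain ⟨ρ, hρ, heq⟩ := ihb
      obtain ⟨β, hβ, heq2⟩ := (hustep b).1
      refine ⟨StmtTwelve.comp ρ β, StmtTwelve.chain_comp hρ hβ, ?_⟩
      rw [heq2, heq, StmtTwelve.comp_assoc]
  refine ⟨fun n => (u (n+1)).1 n, fun n => (u (n+1)).2.1 n, ?_, ?_⟩
  · -- chain property
    intro n
    obtain ⟨ρ, hρ, heq⟩ := compRel (n+1) (n+2) (by omega)
    intro x hx y hy
    have hy2 : y ∈ (StmtTwelve.comp (u (n+1)).1 ρ) (n+1) := by rw [← heq]; exact hy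
    simp only [StmtTwelve.comp, Finset.mem_biUnion] at hy2
    obtain ⟨j, hj, hyj⟩ := hy2
    have hjge : n + 1 ≤ j := StmtTwelve.chain_min_ge hρ (n+1) j hj
    exact (u (n+1)).2.2 n j (by omega) x hx y hyj
  · -- IP-limit
    intro ε hε
    obtain ⟨n₀, hn₀⟩ := exists_nat_one_div_lt hε
    refine ⟨n₀, fun β hβne hβfl => ?_⟩
    have key : ∀ i : ℕ, ∃ δ : Finset ℕ, n₀ ≤ i →
        (δ.Nonempty ∧ (u (i+1)).1 i = δ.biUnion (u (n₀+1)).1) := by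
      intro i
      by_cases h : n₀ ≤ i
      · obtain ⟨ρ, hρ, heq⟩ := compRel (n₀+1) (i+1) (by omega)
        refine ⟨ρ i, fun _ => ⟨hρ.1 i, ?_⟩⟩
        rw [heq]
        rfl
      · exact ⟨∅, fun hc => absurd hc h⟩
    choose σ hσ using key
    have hre : β.biUnion (fun n => (u (n+1)).1 n) = (β.biUnion σ).biUnion (u (n₀+1)).1 := by
      rw [Finset.biUnion_biUnion]
      apply Finset.biUnion_congr rfl
      intro i hi
      exact (hσ i (hβfl i hi)).2
    have hγne : (β.biUnion σ).Nonempty := by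
      rw [Finset.biUnion_nonempty]
      obtain ⟨i, hi⟩ := hβne
      exact ⟨i, hi, (hσ i (hβfl i hi)).1⟩
    have hsmall := (hustep n₀).2 (β.biUnion σ) hγne
    rw [hre]
    calc ‖P ((β.biUnion σ).biUnion (u (n₀+1)).1) f‖ < 1 / ((n₀:ℝ) + 1) := hsmall
    _ < ε := hn₀
end

section
/- Let X be a probability space and (T_n) a sequence of unitary operators on L²(X) induced by measure-preserving transformations (so each T_n is multiplicative on bounded functions and preserves the integral). Assume T_n → P in the weak operator topology for some orthogonal projection P. Then the range of P restricted to L^∞(X) is closed under multiplication: for all f, g ∈ im P ∩ L^∞(X), P(fg) = fg. -/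
/-!
A measure-preserving map preserves the `L²` norm, so for `u` in the range of `P` the vectors
`T n u` have norm `‖u‖` and converge weakly to `u`; hence `‖T n u - u‖² = 2‖u‖² - 2⟪T n u, u⟫ → 0`.
For bounded `f, g` in the range of `P`, the identity
`(fg)∘τ - fg = (f∘τ)(g∘τ - g) + g (f∘τ - f)` and Hölder's inequality with exponents `(∞, 2)`
give `T n (fg) → fg` in norm, so the weak limit `P (fg)` equals `fg`.
-/

open MeasureTheory Filter Topology
open scoped RealInnerProductSpace ENNReal

theorem tendsto_of_norm_eq_of_tendsto_inner_self {E ι : Type*} [NormedAddCommGroup E]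
    [InnerProductSpace ℝ E] {l : Filter ι} {x : ι → E} {u : E} (hnorm : ∀ i, ‖x i‖ = ‖u‖)
    (hinner : Tendsto (fun i => ⟪x i, u⟫) l (𝓝 ⟪u, u⟫)) : Tendsto x l (𝓝 u) := by
  have hsq : Tendsto (fun i => ‖x i - u‖ ^ 2) l (𝓝 0) := by
    have heq : ∀ i, ‖x i - u‖ ^ 2 = 2 * ⟪u, u⟫ - 2 * ⟪x i, u⟫ := fun i => by
      rw [norm_sub_sq_real, hnorm, real_inner_self_eq_norm_sq]; ring
    simpa [heq] using (hinner.const_mul 2).const_sub (2 * ⟪u, u⟫)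
  rw [tendsto_iff_norm_sub_tendsto_zero]
  simpa using hsq.sqrt

namespace MeasureTheory

variable {X E : Type*} [MeasurableSpace X] {μ : Measure X} [NormedAddCommGroup E] {p : ℝ≥0∞}

theorem Lp.norm_eq_of_coeFn_ae_eq_comp {Y : Type*} [MeasurableSpace Y] {ν : Measure Y}
    {τ : X → Y} (hτ : MeasurePreserving τ μ ν) {u : Lp E p ν} {v : Lp E p μ} (hv : v =ᵐ[μ] u ∘ τ) : ‖v‖ = ‖u‖ := by
  rw [Lp.norm_def, Lp.norm_def, eLpNorm_congr_ae hv,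
    eLpNorm_comp_measurePreserving (Lp.aestronglyMeasurable u) hτ]

theorem Lp.tendsto_iff_tendsto_eLpNorm_comp_sub [Fact (1 ≤ p)] {ι : Type*} {l : Filter ι}
    {τ : ι → X → X} {S : ι → Lp E p μ} {u : Lp E p μ} (hS : ∀ i, S i =ᵐ[μ] u ∘ τ i) :
    Tendsto S l (𝓝 u) ↔ Tendsto (fun i => eLpNorm (⇑u ∘ τ i - ⇑u) p μ) l (𝓝 0) := by
  rw [Lp.tendsto_Lp_iff_tendsto_eLpNorm']
  exact tendsto_congr fun i => eLpNorm_congr_ae ((hS i).sub EventuallyEq.rfl)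

theorem eLpNorm_mul_comp_sub_le {τ : X → X} (hτ : MeasurePreserving τ μ μ) {f g : X → ℝ}
    (hf : AEStronglyMeasurable f μ) (hg : AEStronglyMeasurable g μ) (hp : 1 ≤ p) :
    eLpNorm ((f * g) ∘ τ - f * g) p μ ≤
      eLpNorm f ∞ μ * eLpNorm (g ∘ τ - g) p μ + eLpNorm g ∞ μ * eLpNorm (f ∘ τ - f) p μ := by
  have hdecomp : (f * g) ∘ τ - f * g = (f ∘ τ) • (g ∘ τ - g) + g • (f ∘ τ - f) := by
    ext x
    simp only [Pi.sub_apply, Pi.add_apply, Pi.mul_apply, Function.comp_apply,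
      smul_eq_mul]
    ring
  have hfτ := hf.comp_measurePreserving hτ
  have hgτ := hg.comp_measurePreserving hτ
  calc eLpNorm ((f * g) ∘ τ - f * g) p μ
      ≤ eLpNorm ((f ∘ τ) • (g ∘ τ - g)) p μ + eLpNorm (g • (f ∘ τ - f)) p μ := by
        rw [hdecomp]
        exact eLpNorm_add_le (hfτ.smul (hgτ.sub hg)) (hg.smul (hfτ.sub hf)) hp
    _ ≤ eLpNorm (f ∘ τ) ∞ μ * eLpNorm (g ∘ τ - g) p μ
          + eLpNorm g ∞ μ * eLpNorm (f ∘ τ - f) p μ :=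
        add_le_add (eLpNorm_smul_le_eLpNorm_top_mul_eLpNorm p (hgτ.sub hg) _)
          (eLpNorm_smul_le_eLpNorm_top_mul_eLpNorm p (hfτ.sub hf) _)
    _ = _ := by rw [eLpNorm_comp_measurePreserving hf hτ]

theorem tendsto_eLpNorm_mul_comp_sub {ι : Type*} {l : Filter ι} {τ : ι → X → X}
    (hτ : ∀ i, MeasurePreserving (τ i) μ μ) {f g : X → ℝ} (hf : MemLp f ∞ μ) (hg : MemLp g ∞ μ)
    (hp : 1 ≤ p) (hfτ : Tendsto (fun i => eLpNorm (f ∘ τ i - f) p μ) l (𝓝 0))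
    (hgτ : Tendsto (fun i => eLpNorm (g ∘ τ i - g) p μ) l (𝓝 0)) :
    Tendsto (fun i => eLpNorm ((f * g) ∘ τ i - f * g) p μ) l (𝓝 0) := by
  have hbound : Tendsto (fun i => eLpNorm f ∞ μ * eLpNorm (g ∘ τ i - g) p μ
      + eLpNorm g ∞ μ * eLpNorm (f ∘ τ i - f) p μ) l (𝓝 0) := by
    simpa using (ENNReal.Tendsto.const_mul hgτ (Or.inr hf.eLpNorm_ne_top)).add
      (ENNReal.Tendsto.const_mul hfτ (Or.inr hg.eLpNorm_ne_top))
  exact tendsto_of_tendsto_of_tendsto_of_le_of_le tendsto_const_nhds hbound (fun _ => zero_le)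
    fun i => eLpNorm_mul_comp_sub_le (hτ i) hf.1 hg.1 hp

end MeasureTheory

theorem stmt_13_general {X : Type*} [MeasurableSpace X] (μ : Measure X)
    (τ : ℕ → X → X) (hτ : ∀ n, MeasurePreserving (τ n) μ μ)
    (T : ℕ → Lp ℝ 2 μ →L[ℝ] Lp ℝ 2 μ)
    (hT : ∀ n (f : Lp ℝ 2 μ), (T n f : X → ℝ) =ᵐ[μ] fun x => f (τ n x))
    (P : Lp ℝ 2 μ →L[ℝ] Lp ℝ 2 μ)
    (hconv : ∀ f g : Lp ℝ 2 μ,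
      Filter.Tendsto (fun n => ⟪T n f, g⟫) Filter.atTop (nhds ⟪P f, g⟫)) :
    ∀ f g h : Lp ℝ 2 μ, P f = f → P g = g →
      MemLp (f : X → ℝ) ⊤ μ → MemLp (g : X → ℝ) ⊤ μ →
      ((h : X → ℝ) =ᵐ[μ] fun x => f x * g x) → P h = h := by
  intro f g h hPf hPg hfb hgb hmul
  have hfixed : ∀ u, P u = u → Tendsto (fun n => eLpNorm (⇑u ∘ τ n - ⇑u) 2 μ) atTop (𝓝 0) :=
    fun u hu => (Lp.tendsto_iff_tendsto_eLpNorm_comp_sub (hT · u)).1 <|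
      tendsto_of_norm_eq_of_tendsto_inner_self
        (fun n => Lp.norm_eq_of_coeFn_ae_eq_comp (hτ n) (hT n u)) (by simpa [hu] using hconv u u)
  have hTh : Tendsto (fun n => T n h) atTop (𝓝 h) := by
    rw [Lp.tendsto_iff_tendsto_eLpNorm_comp_sub (hT · h)]
    refine (tendsto_eLpNorm_mul_comp_sub hτ hfb hgb one_le_two (hfixed f hPf)
      (hfixed g hPg)).congr fun n => eLpNorm_congr_ae ?_
    exact (((hτ n).quasiMeasurePreserving.ae_eq_comp hmul).sub hmul).symm
  exact ext_inner_right ℝ fun k => tendsto_nhds_unique (hconv h k) (hTh.inner tendsto_const_nhds)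

/-- If `T n` are the Koopman operators on `L²` of measure-preserving
transformations of a probability space and `T n → P` in the weak operator
topology for an orthogonal projection `P`, then the range of `P` intersected
with `L^∞` is closed under multiplication: `P (f * g) = f * g` for bounded
`f, g` in the range of `P`. -/
theorem stmt_13 {X : Type*} [MeasurableSpace X] (μ : Measure X)
    [IsProbabilityMeasure μ]
    (τ : ℕ → X → X) (hτ : ∀ n, MeasurePreserving (τ n) μ μ)
    (T : ℕ → Lp ℝ 2 μ →L[ℝ] Lp ℝ 2 μ)
    (hT : ∀ n (f : Lp ℝ 2 μ), (T n f : X → ℝ) =ᵐ[μ] fun x => f (τ n x))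
    (P : Lp ℝ 2 μ →L[ℝ] Lp ℝ 2 μ)
    (hPidem : IsIdempotentElem P)
    (hPsa : ∀ f g : Lp ℝ 2 μ, ⟪P f, g⟫ = ⟪f, P g⟫)
    (hconv : ∀ f g : Lp ℝ 2 μ,
      Filter.Tendsto (fun n => ⟪T n f, g⟫) Filter.atTop (nhds ⟪P f, g⟫)) :
    ∀ f g h : Lp ℝ 2 μ, P f = f → P g = g →
      MemLp (f : X → ℝ) ⊤ μ → MemLp (g : X → ℝ) ⊤ μ →
      ((h : X → ℝ) =ᵐ[μ] fun x => f x * g x) → P h = h :=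
  stmt_13_general μ τ hτ T hT P hconv
end

section
/- Let G be a compact metric group with metric ρ and write ⟦x⟧ = ρ(x, 1) for the distance to the identity, and let F denote the family of finite nonempty subsets of ℕ. Assume Hindman's theorem: every finite coloring of F is monochrome on some sub-IP-ring. If P : F → G is an IP-system, i.e. P(α∪β) = P(α)P(β) for disjoint α < β, with values in the center of G, then for every ε > 0 there exists a sub-IP-ring F' ⊆ F such that ⟦P(α)⟧ < ε for all α ∈ F'. -/
lemma finsetLT_chain (s : ℕ → Finset ℕ) (hne : ∀ n, (s n).Nonempty)
    (hlt : ∀ n, FinsetLT (s n) (s (n + 1))) :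
    ∀ {n m : ℕ}, n < m → FinsetLT (s n) (s m) := by
  intro n m h
  induction m with
  | zero => omega
  | succ m ih =>
    rcases Nat.lt_succ_iff_lt_or_eq.mp h with h' | h'
    · intro a ha b hb
      obtain ⟨c, hc⟩ := hne m
      exact lt_trans (ih h' a ha c hc) (hlt m c hc b hb)
    · subst h'; exact hlt n

/-- Let `G` be a compact metric topological group and `P` an IP-system in `G`
with central values. Assuming Hindman's theorem (every finite coloring of the
finite nonempty subsets of `ℕ` is monochrome on a sub-IP-ring), for every
`ε > 0` there is a sub-IP-ring on which `dist (P α) 1 < ε`. -/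
theorem stmt_17 {G : Type*} [Group G] [MetricSpace G] [CompactSpace G]
    [IsTopologicalGroup G]
    (P : Finset ℕ → G)
    (hIP : ∀ α β : Finset ℕ, α.Nonempty → β.Nonempty → Disjoint α β →
      P (α ∪ β) = P α * P β)
    (hcentral : ∀ α : Finset ℕ, ∀ g : G, P α * g = g * P α)
    (hHindman : ∀ (k : ℕ) (c : Finset ℕ → Fin k),
      ∃ s : ℕ → Finset ℕ, (∀ n, (s n).Nonempty) ∧
        (∀ n, FinsetLT (s n) (s (n + 1))) ∧
        ∃ i : Fin k, ∀ β : Finset ℕ, β.Nonempty → c (β.biUnion s) = i) :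
    ∀ ε > (0 : ℝ), ∃ s : ℕ → Finset ℕ, (∀ n, (s n).Nonempty) ∧
      (∀ n, FinsetLT (s n) (s (n + 1))) ∧
      ∀ β : Finset ℕ, β.Nonempty → dist (P (β.biUnion s)) 1 < ε := by
  intro ε hε
  -- uniform continuity of (x, y) ↦ x * y⁻¹
  have hf : UniformContinuous (fun p : G × G => p.1 * p.2⁻¹) :=
    CompactSpace.uniformContinuous_of_continuous (continuous_fst.mul continuous_snd.inv)
  obtain ⟨δ, hδ, hδf⟩ := Metric.uniformContinuous_iff.mp hf ε hε
  -- finite cover of G by balls of radius δ/2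
  obtain ⟨t, -, htfin, htcov⟩ :=
    finite_cover_balls_of_compact (isCompact_univ (X := G)) (by positivity : (0:ℝ) < δ/2)
  classical
  set l : List G := htfin.toFinset.toList with hl
  have hmem : ∀ x : G, ∃ i : Fin l.length, dist x (l.get i) < δ / 2 := by
    intro x
    have := htcov (Set.mem_univ x)
    simp only [Set.mem_iUnion, Metric.mem_ball] at this
    obtain ⟨y, hy, hxy⟩ := this
    have hyl : y ∈ l := by
      rw [hl, Finset.mem_toList, Set.Finite.mem_toFinset]; exact hy
    obtain ⟨i, hi⟩ := List.get_of_mem hyl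
    exact ⟨i, by rw [hi]; exact hxy⟩
  -- coloring
  let c : Finset ℕ → Fin l.length := fun α => (hmem (P α)).choose
  have hc : ∀ α, dist (P α) (l.get (c α)) < δ / 2 := fun α => (hmem (P α)).choose_spec
  obtain ⟨s, hne, hlt, i, hmono⟩ := hHindman l.length c
  refine ⟨s, hne, hlt, ?_⟩
  set g : G := l.get i with hg
  have hclose : ∀ β : Finset ℕ, β.Nonempty → dist (P (β.biUnion s)) g < δ / 2 := by
    intro β hβ
    have := hc (β.biUnion s)
    rwa [hmono β hβ] at this
  intro β hβ
  -- take m above all of β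
  set m : ℕ := β.max' hβ + 1 with hm
  have hmβ : ∀ n ∈ β, n < m := fun n hn => Nat.lt_succ_of_le (β.le_max' n hn)
  have hβs : (β.biUnion s).Nonempty := by
    obtain ⟨n, hn⟩ := hβ
    obtain ⟨a, ha⟩ := hne n
    exact ⟨a, Finset.mem_biUnion.mpr ⟨n, hn, ha⟩⟩
  have hdisj : Disjoint (β.biUnion s) (s m) := by
    rw [Finset.disjoint_left]
    intro a ha ham
    obtain ⟨n, hn, hasn⟩ := Finset.mem_biUnion.mp ha
    exact lt_irrefl a (finsetLT_chain s hne hlt (hmβ n hn) a hasn a ham)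
  have hsm : (s m).Nonempty := hne m
  have hunion : ((β ∪ {m}).biUnion s) = β.biUnion s ∪ s m := by
    ext a
    simp only [Finset.mem_biUnion, Finset.mem_union, Finset.mem_singleton]
    constructor
    · rintro ⟨n, hn | rfl, ha⟩
      · exact Or.inl ⟨n, hn, ha⟩
      · exact Or.inr ha
    · rintro (⟨n, hn, ha⟩ | ha)
      · exact ⟨n, Or.inl hn, ha⟩
      · exact ⟨m, Or.inr rfl, ha⟩
  have hPu : P ((β ∪ {m}).biUnion s) = P (β.biUnion s) * P (s m) := by
    rw [hunion]; exact hIP _ _ hβs hsm hdisj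
  have hβm : (β ∪ {m}).Nonempty := Finset.Nonempty.inl hβ
  have h1 : dist (P ((β ∪ {m}).biUnion s)) g < δ / 2 := hclose _ hβm
  have h2 : dist (P (s m)) g < δ / 2 := by
    have := hclose {m} (Finset.singleton_nonempty m)
    rwa [Finset.singleton_biUnion] at this
  have hkey : dist (P ((β ∪ {m}).biUnion s) * (P (s m))⁻¹) (g * g⁻¹) < ε := by
    apply hδf (a := (P ((β ∪ {m}).biUnion s), P (s m))) (b := (g, g))
    rw [Prod.dist_eq]
    exact max_lt (lt_of_lt_of_le h1 (by linarith)) (lt_of_lt_of_le h2 (by linarith))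
  rw [hPu, mul_inv_cancel_right] at hkey
  rwa [mul_inv_cancel] at hkey
end
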